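/- arXiv:2001.00544 — 4 statements merged into one kernel-verified Lean document; each statement's English description precedes it below -/
import Mathlib

section
/- If G is a finite non-abelian group, then the probability that two uniformly random elements of G commute is at most 5/8. -/
/-!
The commuting probability of `G` is `k(G) / |G|`, where `k(G)` is the number of conjugacy
classes. The `|Z(G)|` central classes are singletons and every other class has at least two
elements, so `2 k(G) ≤ |G| + |Z(G)|`, i.e. the probability is at most `(1 + 1 / [G : Z(G)]) / 2`.
If `G` is not abelian then `G / Z(G)` is not cyclic, so `[G : Z(G)] ≥ 4`, giving `5 / 8`.
-/

open ConjClasses Subgroup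

section

variable {G : Type*} [Group G] [Finite G]

lemma four_le_index_center (h : ¬ IsMulCommutative G) : 4 ≤ (center G).index := by
  have not_cyclic : ¬ IsCyclic (G ⧸ center G) := fun _ ↦
    h ((QuotientGroup.mk' (center G)).isMulCommutative_of_isCyclic_of_ker_le_center
      (QuotientGroup.ker_mk' _).le)
  by_contra! hlt
  have : 0 < Nat.card (G ⧸ center G) := Nat.card_pos
  rw [index] at hlt
  interval_cases hq : Nat.card (G ⧸ center G)
  · exact not_cyclic (isCyclic_of_card_dvd_prime (p := 2) (by simp [hq]))
  · exact not_cyclic (isCyclic_of_prime_card (p := 2) hq)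
  · exact not_cyclic (isCyclic_of_prime_card (p := 3) hq)

lemma card_conjClasses_eq_card_noncenter_add_card_center :
    Nat.card (ConjClasses G) = Nat.card (noncenter G) + Nat.card (center G) := calc
  Nat.card (ConjClasses G) = (noncenter G).ncard + (noncenter G)ᶜ.ncard :=
    (Set.ncard_add_ncard_compl _).symm
  _ = Nat.card (noncenter G) + Nat.card (center G) :=
    congrArg _ (Nat.card_congr ((mk_bijOn G).equiv _)).symm

lemma two_mul_card_noncenter_add_card_center_le :
    2 * Nat.card (noncenter G) + Nat.card (center G) ≤ Nat.card G := by
  classical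
  cases nonempty_fintype G
  have hsum : (noncenter G).toFinset.card • 2 ≤
      ∑ x ∈ (noncenter G).toFinset, x.carrier.toFinset.card :=
    Finset.card_nsmul_le_sum _ _ _ fun x hx ↦ by
      rw [Set.toFinset_card, ← Nat.card_eq_fintype_card]
      exact Set.one_lt_ncard_iff_nontrivial.mpr ((Set.mem_toFinset (s := noncenter G)).mp hx)
  have := Group.card_center_add_sum_card_noncenter_eq_card G
  rw [smul_eq_mul, Set.toFinset_card] at hsum
  simp only [Nat.card_eq_fintype_card]
  omega

lemma two_mul_card_conjClasses_le :
    2 * Nat.card (ConjClasses G) ≤ Nat.card G + Nat.card (center G) := by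
  have := two_mul_card_noncenter_add_card_center_le (G := G)
  rw [card_conjClasses_eq_card_noncenter_add_card_center]
  omega

lemma commProb_le_half_add_inv_index :
    commProb G ≤ (1 + ((center G).index : ℚ)⁻¹) / 2 := by
  have hG : (0 : ℚ) < Nat.card G := mod_cast Nat.card_pos
  have hi : ((center G).index : ℚ) ≠ 0 := mod_cast index_ne_zero_of_finite
  have hk : (2 * Nat.card (ConjClasses G) : ℚ) ≤ Nat.card G + Nat.card (center G) :=
    mod_cast two_mul_card_conjClasses_le
  have hZ : (Nat.card (center G) : ℚ) = Nat.card G * ((center G).index : ℚ)⁻¹ := by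
    rw [eq_mul_inv_iff_mul_eq₀ hi]
    exact_mod_cast card_mul_index (center G)
  rw [commProb_def', div_le_iff₀ hG]
  linarith

end

/-- Gustafson: a finite non-abelian group has commuting probability at most 5/8. -/
theorem commuting_probability_le_five_eighths
    (G : Type*) [Group G] [Finite G] (h : ¬ ∀ a b : G, a * b = b * a) :
    (Nat.card {p : G × G // p.1 * p.2 = p.2 * p.1} : ℚ) / (Nat.card G : ℚ) ^ 2 ≤ 5 / 8 := by
  have hindex : (4 : ℚ) ≤ (center G).index :=
    mod_cast four_le_index_center fun hc ↦ h fun a b ↦ mul_comm' a b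
  calc commProb G ≤ (1 + ((center G).index : ℚ)⁻¹) / 2 := commProb_le_half_add_inv_index
    _ ≤ (1 + 4⁻¹) / 2 := by gcongr
    _ = 5 / 8 := by norm_num
end

section
/- Let G be a group with a finitely additive right-invariant probability measure μ defined on all subsets of G. If X ⊆ G satisfies μ(X) = ε > 0, then there exist at most ⌊1/ε⌋ elements y₁, …, y_m of G such that G = ⋃ᵢ X⁻¹X yᵢ. -/
open Pointwise

/-- A finitely additive right-invariant probability measure on all subsets of a group. -/
structure RIProb (G : Type*) [Group G] where
  m : Set G → ℝ
  nonneg : ∀ A : Set G, 0 ≤ m A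
  total : m Set.univ = 1
  additive : ∀ A B : Set G, Disjoint A B → m (A ∪ B) = m A + m B
  rightInv : ∀ (A : Set G) (g : G), m (A * {g}) = m A

lemma RIProb.empty {G : Type*} [Group G] (μ : RIProb G) : μ.m ∅ = 0 := by
  have := μ.additive ∅ ∅ (by simp)
  simp at this; linarith

lemma RIProb.le_one {G : Type*} [Group G] (μ : RIProb G) (A : Set G) : μ.m A ≤ 1 := by
  have h := μ.additive A Aᶜ disjoint_compl_right
  rw [Set.union_compl_self, μ.total] at h
  have := μ.nonneg Aᶜ
  linarith

lemma RIProb.biUnion {G : Type*} [Group G] (μ : RIProb G) (X : Set G) (s : Finset G)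
    (hdisj : (s : Set G).PairwiseDisjoint (fun y => X * ({y} : Set G))) :
    μ.m (⋃ y ∈ s, X * ({y} : Set G)) = s.card * μ.m X := by
  classical
  induction s using Finset.induction with
  | empty => simp [μ.empty]
  | @insert a s ha ih =>
    rw [Finset.set_biUnion_insert]
    have hd : Disjoint (X * ({a} : Set G)) (⋃ y ∈ s, X * ({y} : Set G)) := by
      rw [Set.disjoint_iUnion₂_right]
      intro y hy
      exact hdisj (by simp) (by simp [hy]) (by rintro rfl; exact ha hy)
    rw [μ.additive _ _ hd, μ.rightInv, ih (hdisj.subset (by simp))]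
    rw [Finset.card_insert_of_notMem ha]
    push_cast
    ring

/-- If `μ(X) = ε > 0`, then `G` is covered by at most `⌊1/ε⌋` right translates of `X⁻¹X`. -/
theorem covered_by_floor_inv_eps_translates
    (G : Type*) [Group G] (μ : RIProb G) (X : Set G) (ε : ℝ) (hε : 0 < ε)
    (hX : μ.m X = ε) :
    ∃ s : Finset G, s.card ≤ Nat.floor (1 / ε) ∧ ∀ g : G, ∃ y ∈ s, g ∈ X⁻¹ * X * {y} := by
  classical
  set P : Finset G → Prop := fun s => (s : Set G).PairwiseDisjoint (fun y => X * ({y} : Set G))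
  have hbound : ∀ s : Finset G, P s → s.card ≤ Nat.floor (1 / ε) := by
    intro s hs
    have h1 := μ.biUnion X s hs
    have h2 := μ.le_one (⋃ y ∈ s, X * ({y} : Set G))
    rw [hX] at h1
    have : (s.card : ℝ) ≤ 1 / ε := by
      rw [le_div_iff₀ hε]; nlinarith
    exact Nat.le_floor this
  -- pick a maximal-cardinality family
  have hne : ∃ n, ∃ s : Finset G, P s ∧ s.card = n := ⟨0, ∅, by simp [P], rfl⟩
  have hbdd : ∀ n ∈ {n | ∃ s : Finset G, P s ∧ s.card = n}, n ≤ Nat.floor (1 / ε) := by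
    rintro n ⟨s, hs, rfl⟩; exact hbound s hs
  set S : Set ℕ := {n | ∃ s : Finset G, P s ∧ s.card = n} with hS
  have hSne : S.Nonempty := hne
  have hSbdd : BddAbove S := ⟨Nat.floor (1/ε), fun n hn => hbdd n hn⟩
  have hmem : sSup S ∈ S := Nat.sSup_mem hSne hSbdd
  obtain ⟨s, hs, hcard⟩ := hmem
  have hmax : ∀ k ∈ S, k ≤ sSup S := fun k hk => le_csSup hSbdd hk
  set n := sSup S
  refine ⟨s, hbound s hs, ?_⟩
  intro g
  -- X nonempty
  have hXne : X.Nonempty := by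
    rcases Set.eq_empty_or_nonempty X with h | h
    · rw [h, μ.empty] at hX; linarith
    · exact h
  by_contra hcon
  push_neg at hcon
  -- then X*{g} is disjoint from every X*{y}, y ∈ s
  have hdg : ∀ y ∈ s, Disjoint (X * ({g} : Set G)) (X * ({y} : Set G)) := by
    intro y hy
    rw [Set.disjoint_left]
    rintro z hz1 hz2
    rw [Set.mem_mul] at hz1 hz2
    obtain ⟨x1, hx1, g', hg', rfl⟩ := hz1
    obtain ⟨x2, hx2, y', hy', heq⟩ := hz2
    simp only [Set.mem_singleton_iff] at hg' hy'
    subst hg'; subst hy'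
    refine hcon _ hy ?_
    have hgeq : g' = x1⁻¹ * x2 * y' := by
      rw [mul_assoc, eq_inv_mul_iff_mul_eq]
      exact heq.symm
    rw [hgeq]
    exact Set.mul_mem_mul (Set.mul_mem_mul (Set.inv_mem_inv.2 hx1) hx2) rfl
  have hgs : g ∉ s := by
    intro hgs
    have := hdg g hgs
    rw [disjoint_self] at this
    obtain ⟨x, hx⟩ := hXne
    have : x * g ∈ X * ({g} : Set G) := Set.mul_mem_mul hx rfl
    simp_all
  have hP : P (insert g s) := by
    intro a ha b hb hab
    simp only [Finset.coe_insert, Set.mem_insert_iff, Finset.mem_coe] at ha hb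
    rcases ha with rfl | ha
    · rcases hb with rfl | hb
      · exact absurd rfl hab
      · exact hdg b hb
    · rcases hb with rfl | hb
      · exact (hdg a ha).symm
      · exact hs ha hb hab
  have := hmax (n + 1) ⟨insert g s, hP, by rw [Finset.card_insert_of_notMem hgs, hcard]⟩
  omega
end

section
/- Let G be a group, H a subgroup of finite index in G, and N ⊴ G a normal subgroup contained in H. Then FC_H(H/(H ∩ N)) = H ∩ FC_G(G/N); that is, for h ∈ H, the preimage in H of C_{H/(H∩N)}(h(H∩N)) has finite index in H if and only if the preimage in G of C_{G/N}(hN) has finite index in G. -/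
/-! For `x, h ∈ H` the element `(x h)⁻¹ (h x)` already lies in `H`, so it lies in `H ∩ N` iff it
lies in `N`: the preimage in `H` of the centralizer of `h` modulo `H ∩ N` is the intersection
with `H` of the preimage in `G` of the centralizer modulo `N`. Since `H` has finite index, a
subgroup of `G` meets `H` in a subgroup of finite index in `H` iff it has finite index in `G`. -/

namespace Subgroup

variable {G : Type*} [Group G]

lemma finiteIndex_subgroupOf_iff (K H : Subgroup G) [H.FiniteIndex] :
    (K.subgroupOf H).FiniteIndex ↔ K.FiniteIndex := by
  refine ⟨fun hK => ⟨?_⟩, fun _ => inferInstance⟩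
  rw [← relIndex_top_right] at *
  exact relIndex_ne_zero_trans hK.index_ne_zero (relIndex_top_right H ▸ FiniteIndex.index_ne_zero)

lemma comap_mk'_centralizer_subgroupOf (N H : Subgroup G) [N.Normal] (h : H) :
    comap (QuotientGroup.mk' (N.subgroupOf H)) (centralizer {QuotientGroup.mk' _ h}) =
      (comap (QuotientGroup.mk' N) (centralizer {QuotientGroup.mk' N (h : G)})).subgroupOf H := by
  ext x
  simp only [mem_subgroupOf, mem_comap, QuotientGroup.mk'_apply, mem_centralizer_singleton_iff,
    ← QuotientGroup.mk_mul, QuotientGroup.eq, coe_mul, coe_inv]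

end Subgroup

theorem fc_mod_N_of_finite_index_subgroup_general
    (G : Type*) [Group G] (H N : Subgroup G) [N.Normal]
    (hHfi : H.FiniteIndex) :
    ∀ h : H,
      (Subgroup.comap (QuotientGroup.mk' (N.subgroupOf H))
          (Subgroup.centralizer {QuotientGroup.mk' (N.subgroupOf H) h})).FiniteIndex ↔
        (Subgroup.comap (QuotientGroup.mk' N)
          (Subgroup.centralizer {QuotientGroup.mk' N (h : G)})).FiniteIndex := by
  intro h
  rw [Subgroup.comap_mk'_centralizer_subgroupOf]
  exact Subgroup.finiteIndex_subgroupOf_iff _ H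

/-- For `H ≤ G` of finite index and `N ⊴ G` with `N ⊆ H`:
`FC_H(H/(H ∩ N)) = H ∩ FC_G(G/N)`, i.e. for `h ∈ H` the preimage in `H` of the centralizer
of `h` modulo `H ∩ N` has finite index in `H` iff the preimage in `G` of the centralizer of
`h` modulo `N` has finite index in `G`. -/
theorem fc_mod_N_of_finite_index_subgroup
    (G : Type*) [Group G] (H N : Subgroup G) [N.Normal] [(N.subgroupOf H).Normal]
    (hHfi : H.FiniteIndex) (hNH : N ≤ H) :
    ∀ h : H,
      (Subgroup.comap (QuotientGroup.mk' (N.subgroupOf H))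
          (Subgroup.centralizer {QuotientGroup.mk' (N.subgroupOf H) h})).FiniteIndex ↔
        (Subgroup.comap (QuotientGroup.mk' N)
          (Subgroup.centralizer {QuotientGroup.mk' N (h : G)})).FiniteIndex :=
  fc_mod_N_of_finite_index_subgroup_general G H N hHfi
end

section
/- Every group that is FC-nilpotent and has finite exponent is locally finite: if G = FC_n(G) for some n and G has finite exponent, then every finitely generated subgroup of G is finite. -/
/-- The `m`-th iterated FC-center of `G` (as a set): `FC₀(G) = {1}` and `x ∈ FC_{m+1}(G)`
iff `C_G(x / FC_m(G)) = {y | [x,y] ∈ FC_m(G)}` has finite index in `G`, i.e. finitely many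
right translates of it cover `G`. -/
def FCset (G : Type*) [Group G] : ℕ → Set G
  | 0 => {1}
  | (m + 1) => {x : G | ∃ T : Finset G, ∀ g : G, ∃ t ∈ T,
      x⁻¹ * (g * t⁻¹)⁻¹ * x * (g * t⁻¹) ∈ FCset G m}

/-
Induct on `n` over finitely generated subgroups `H ⊆ FC_n(G)`. With `N = FC_{n-1}(G)`, the image
of `H` in `G/N` is a finitely generated group in which every centralizer has finite index, so its
centre has finite index; by Schreier's lemma the centre is finitely generated, and an abelian
finitely generated group of finite exponent is finite. Hence `H ∩ N` has finite index in `H`, so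
it is finitely generated, and it is finite by induction.
-/

section

open Subgroup

variable {G : Type*} [Group G]

theorem Subgroup.finiteIndex_iff_exists_finset_mul_inv_mem {K : Subgroup G} :
    K.FiniteIndex ↔ ∃ T : Finset G, ∀ g : G, ∃ t ∈ T, g * t⁻¹ ∈ K := by
  classical
  constructor
  · intro _
    refine ⟨(Set.finite_range fun q : G ⧸ K => q.out⁻¹).toFinset, fun g =>
      ⟨((g⁻¹ : G) : G ⧸ K).out⁻¹, by simp, ?_⟩⟩
    simpa using QuotientGroup.eq.1 (QuotientGroup.out_eq' ((g⁻¹ : G) : G ⧸ K)).symm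
  · rintro ⟨T, hT⟩
    have : Finite (G ⧸ K) := by
      refine Finite.of_surjective (fun t : T => ((t⁻¹ : G) : G ⧸ K)) fun q => ?_
      obtain ⟨h, rfl⟩ := QuotientGroup.mk_surjective q
      obtain ⟨t, ht, hmem⟩ := hT h⁻¹
      exact ⟨⟨t, ht⟩, QuotientGroup.eq.2 (by simpa using K.inv_mem hmem)⟩
    exact finiteIndex_of_finite_quotient

/-- The FC-centre: the elements with finitely many conjugates. -/
def fcCenter (G : Type*) [Group G] : Subgroup G where
  carrier := {x | (centralizer {x}).FiniteIndex}
  one_mem' := by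
    change (centralizer {1}).FiniteIndex
    rw [centralizer_eq_top_iff_subset.2 (Set.singleton_subset_iff.2 (one_mem _))]
    infer_instance
  mul_mem' {x y} (hx : (centralizer {x}).FiniteIndex) (hy : (centralizer {y}).FiniteIndex) :=
    finiteIndex_of_le (H := centralizer {x} ⊓ centralizer {y}) fun g hg => by
      obtain ⟨hgx, hgy⟩ := mem_inf.1 hg
      rw [mem_centralizer_singleton_iff] at hgx hgy ⊢
      exact (Commute.mul_right hgx hgy : Commute g (x * y))
  inv_mem' {x} (hx : (centralizer {x}).FiniteIndex) :=
    finiteIndex_of_le (H := centralizer {x}) fun g hg => by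
      rw [mem_centralizer_singleton_iff] at hg ⊢
      exact (Commute.inv_right hg : Commute g x⁻¹)

theorem mem_fcCenter {x : G} : x ∈ fcCenter G ↔ (centralizer {x}).FiniteIndex := Iff.rfl

theorem centralizer_conj (g x : G) :
    centralizer {g * x * g⁻¹} = (centralizer {x}).comap (MulAut.conj g⁻¹).toMonoidHom := by
  ext y
  simp only [mem_comap, mem_centralizer_singleton_iff, MulEquiv.coe_toMonoidHom,
    MulAut.conj_apply, inv_inv]
  rw [← (MulAut.conj g⁻¹).injective.eq_iff]
  simp [mul_assoc]

instance : (fcCenter G).Normal where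
  conj_mem x hx g := by
    rw [mem_fcCenter, centralizer_conj, finiteIndex_iff,
      index_comap_of_surjective _ (MulEquiv.surjective _)]
    exact hx.index_ne_zero

theorem QuotientGroup.mem_comap_centralizer_mk_iff (N : Subgroup G) [N.Normal] (x y : G) :
    y ∈ (centralizer {(x : G ⧸ N)}).comap (QuotientGroup.mk' N) ↔ x⁻¹ * y⁻¹ * x * y ∈ N := by
  rw [mem_comap, mem_centralizer_singleton_iff, QuotientGroup.mk'_apply, ← QuotientGroup.mk_mul,
    ← QuotientGroup.mk_mul, QuotientGroup.eq]
  simp only [mul_inv_rev, mul_assoc]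

theorem FCset_succ_eq_comap_fcCenter {m : ℕ} (N : Subgroup G) [N.Normal]
    (hN : (N : Set G) = FCset G m) :
    FCset G (m + 1) = (fcCenter (G ⧸ N)).comap (QuotientGroup.mk' N) := by
  ext x
  change (∃ T : Finset G, ∀ g : G, ∃ t ∈ T, x⁻¹ * (g * t⁻¹)⁻¹ * x * (g * t⁻¹) ∈ FCset G m) ↔ _
  rw [← hN, SetLike.mem_coe, mem_comap, mem_fcCenter, QuotientGroup.mk'_apply, finiteIndex_iff,
    ← index_comap_of_surjective _ (QuotientGroup.mk'_surjective N), ← finiteIndex_iff,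
    finiteIndex_iff_exists_finset_mul_inv_mem]
  simp only [QuotientGroup.mem_comap_centralizer_mk_iff, SetLike.mem_coe]

variable (G) in
theorem exists_normal_coe_eq_FCset (m : ℕ) :
    ∃ N : Subgroup G, N.Normal ∧ (N : Set G) = FCset G m := by
  induction m with
  | zero => exact ⟨⊥, inferInstance, rfl⟩
  | succ m ih =>
    obtain ⟨N, _, hN⟩ := ih
    exact ⟨_, inferInstance, (FCset_succ_eq_comap_fcCenter N hN).symm⟩

theorem finiteIndex_center_of_forall_finiteIndex_centralizer [Group.FG G]
    (h : ∀ x : G, (centralizer {x}).FiniteIndex) : (center G).FiniteIndex := by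
  obtain ⟨S, hS⟩ := Group.FG.out (G := G)
  rw [center_eq_infi' hS]
  exact finiteIndex_iInf fun x => h x

open scoped IsMulCommutative in
theorem finite_of_fg_of_finiteIndex_center [Group.FG G] [(center G).FiniteIndex] {e : ℕ}
    (he : e ≠ 0) (hexp : ∀ g : G, g ^ e = 1) : Finite G := by
  have hcenter : Nat.card (center G) ≠ 0 :=
    ne_zero_of_dvd_ne_zero (pow_ne_zero _ he)
      (card_dvd_exponent_pow_rank' (center G) fun z => Subtype.ext (hexp z))
  apply Nat.finite_of_card_ne_zero
  rw [← card_mul_index (center G)]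
  exact mul_ne_zero hcenter FiniteIndex.index_ne_zero

theorem Subgroup.finite_of_fg_of_le_fcCenter {K : Subgroup G} (hK : K.FG) (hle : K ≤ fcCenter G)
    {e : ℕ} (he : e ≠ 0) (hexp : ∀ g : G, g ^ e = 1) : Finite K := by
  have : Group.FG K := (Group.fg_iff_subgroup_fg K).2 hK
  have : (center K).FiniteIndex := finiteIndex_center_of_forall_finiteIndex_centralizer fun x =>
    have : (centralizer {(x : G)}).FiniteIndex := hle x.2
    finiteIndex_of_le (H := (centralizer {(x : G)}).subgroupOf K) fun y hy => by
      rw [mem_subgroupOf, mem_centralizer_singleton_iff] at hy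
      exact mem_centralizer_singleton_iff.2 (Subtype.ext hy)
  exact finite_of_fg_of_finiteIndex_center he fun g => Subtype.ext (hexp g)

theorem Subgroup.FG.map {G' : Type*} [Group G'] {H : Subgroup G} (hH : H.FG) (f : G →* G') :
    (H.map f).FG := by
  classical
  obtain ⟨S, hS⟩ := hH
  exact ⟨S.image f, by rw [Finset.coe_image, ← MonoidHom.map_closure, hS]⟩

theorem Subgroup.FG.inf_of_relIndex_ne_zero {H K : Subgroup G} (hH : H.FG)
    (hK : K.relIndex H ≠ 0) : (K ⊓ H).FG := by
  have : Group.FG H := (Group.fg_iff_subgroup_fg H).2 hH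
  have : (K.subgroupOf H).FiniteIndex := ⟨hK⟩
  rw [← subgroupOf_map_subtype]
  exact ((Group.fg_iff_subgroup_fg _).1 inferInstance).map H.subtype

theorem Subgroup.finite_of_finite_inf_of_relIndex_ne_zero {H K : Subgroup G} [Finite ↥(K ⊓ H)]
    (hK : K.relIndex H ≠ 0) : Finite H := by
  have hcard : Nat.card ↥(K ⊓ H) * K.relIndex H = Nat.card H := by
    simpa [relIndex_bot_left] using relIndex_inf_mul_relIndex ⊥ K H
  apply Nat.finite_of_card_ne_zero
  rw [← hcard]
  exact mul_ne_zero Nat.card_pos.ne' hK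

theorem finite_of_fg_of_subset_FCset {e : ℕ} (he : e ≠ 0) (hexp : ∀ g : G, g ^ e = 1) (n : ℕ) :
    ∀ H : Subgroup G, H.FG → (H : Set G) ⊆ FCset G n → Finite H := by
  induction n with
  | zero => exact fun H _ hH => ((Set.finite_singleton 1).subset hH).to_subtype
  | succ n ih =>
    intro H hH hsub
    obtain ⟨N, _, hN⟩ := exists_normal_coe_eq_FCset G n
    rw [FCset_succ_eq_comap_fcCenter N hN, SetLike.coe_subset_coe, ← map_le_iff_le_comap] at hsub
    have hexpQ : ∀ q : G ⧸ N, q ^ e = 1 := fun q => by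
      induction q using QuotientGroup.induction_on with
      | H g => rw [← QuotientGroup.mk_pow, hexp, QuotientGroup.mk_one]
    have : Finite (H.map (QuotientGroup.mk' N)) :=
      finite_of_fg_of_le_fcCenter (hH.map _) hsub he hexpQ
    have hrel : N.relIndex H ≠ 0 := by
      rw [← QuotientGroup.ker_mk' N, relIndex_ker]
      exact Nat.card_pos.ne'
    have : Finite ↥(N ⊓ H) := ih _ (hH.inf_of_relIndex_ne_zero hrel)
      (hN ▸ Set.inter_subset_left)
    exact finite_of_finite_inf_of_relIndex_ne_zero hrel

end

/-- An FC-nilpotent group of finite exponent is locally finite: every finitely generated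
subgroup is finite. -/
theorem locally_finite_of_fc_nilpotent_of_finite_exponent
    (G : Type*) [Group G] (n e : ℕ) (he : e ≠ 0)
    (hfc : FCset G n = Set.univ) (hexp : ∀ g : G, g ^ e = 1) :
    ∀ H : Subgroup G, H.FG → Finite H :=
  fun H hH => finite_of_fg_of_subset_FCset he hexp n H hH (hfc ▸ Set.subset_univ _)
end
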